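/- Let r = 4d + 1 with d ≥ 1 an integer. For every ε > 0 there exists N such that for all even n ≥ N, f_r(n) ≤ 2 · (1 + ε) · [∑_{i=0}^{d−1} C(n/2, i) · C(n/2, (r−1)/2 − i)] + 2 · f_{2d}(n/2) · f_{2d+1}(n/2), where C(n, k) denotes the binomial coefficient. -/

import Mathlib

/-- A complete `r`-partite `r`-graph (a "block") on a finite vertex set `V ⊆ ℕ`:
it is determined by `r` pairwise disjoint nonempty subsets of `V`. -/
structure Block (V : Finset ℕ) (r : ℕ) where
  parts : Fin r → Finset ℕ
  nonempty : ∀ i, (parts i).Nonempty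
  subset : ∀ i, parts i ⊆ V
  disj : ∀ i j, i ≠ j → Disjoint (parts i) (parts j)

/-- The edge set of a block: all sets contained in the union of the parts
meeting each part in exactly one vertex. -/
def Block.edges {V : Finset ℕ} {r : ℕ} (B : Block V r) : Set (Finset ℕ) :=
  {X | (∀ i, (X ∩ B.parts i).card = 1) ∧ ∀ x ∈ X, ∃ i, x ∈ B.parts i}

/-- `ExactCover V r k F` : there are `k` complete `r`-partite `r`-graphs on `V`
whose edge sets are pairwise disjoint and whose union is the family `F`. -/
def ExactCover (V : Finset ℕ) (r k : ℕ) (F : Set (Finset ℕ)) : Prop :=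
  ∃ B : Fin k → Block V r,
    (∀ i j, i ≠ j → Disjoint (B i).edges (B j).edges) ∧
    (⋃ i, (B i).edges) = F

/-- `f r n` : the minimum number of complete `r`-partite `r`-graphs needed to
partition the edge set of the complete `r`-uniform hypergraph on `[n]`. -/
noncomputable def f (r n : ℕ) : ℕ :=
  sInf {k | ExactCover (Finset.range n) r k
    {X | X ⊆ Finset.range n ∧ X.card = r}}

/-!
Write `n = 2m` and split `[2m]` into the halves `A = [0, m)` and `B = [m, 2m)`. For a finite set
`Y` let `evens Y` be its elements of even rank (the 2nd, 4th, … smallest). Let `X` be an `r`-set,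
`r = 4d + 1`, and `a = |X ∩ A|`.

* If `a ∈ {2d, 2d + 1}`, then `X` is an edge of the product of a block partitioning the `a`-sets
  of `A` with a block partitioning the `(r - a)`-sets of `B`: `2 f(2d, m) f(2d + 1, m)` blocks.
* Otherwise `X` lies in the gadget block of `(S, S') = (evens (X ∩ A), evens (X ∩ B))`. Its parts
  are the singletons of `S ∪ S'`, the gap of `A` below each `s ∈ S` (down to the previous element
  of `S`), the same gaps of `B` for `S'`, and one overflow part: the elements of `A` above `S`
  together with those of `B` above `S'`. The transversals of the singletons and gaps of `A` are
  the `2|S|`-subsets `Y` of `A` with `evens Y = S`, and the overflow vertex makes exactly one side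
  odd, so the edges of the gadget are the `X` with `evens (X ∩ A) = S`, `evens (X ∩ B) = S'` and
  `|X| = 2 (|S| + |S'|) + 1`. As `|S| + |S'| = 2d` and `|S| ≠ d`, at most
  `2 ∑_{i < d} C(m, i) C(m, 2d - i)` gadgets are needed.

Hence `f(4d + 1, 2m) ≤ 2 ∑_{i < d} C(m, i) C(m, 2d - i) + 2 f(2d, m) f(2d + 1, m)` for every `m`.
-/

open Finset

section Transversal

variable {α : Type*} [DecidableEq α] {𝒜 𝒜₁ 𝒜₂ : Finset (Finset α)} {P Q Q₁ Q₂ T₁ T₂ X : Finset α}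

def IsTransversal (𝒜 : Finset (Finset α)) (X : Finset α) : Prop :=
  (∀ P ∈ 𝒜, (X ∩ P).card = 1) ∧ ∀ x ∈ X, ∃ P ∈ 𝒜, x ∈ P

theorem IsTransversal.nonempty (h : IsTransversal 𝒜 X) (hP : P ∈ 𝒜) : P.Nonempty :=
  (card_pos.1 (h.1 P hP ▸ Nat.one_pos)).mono inter_subset_right

theorem IsTransversal.card_eq (h𝒜 : (𝒜 : Set (Finset α)).PairwiseDisjoint id)
    (h : IsTransversal 𝒜 X) : X.card = 𝒜.card := by
  have hX : X = 𝒜.biUnion (X ∩ ·) := by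
    ext x
    simp only [mem_biUnion, mem_inter]
    exact ⟨fun hx => (h.2 x hx).imp fun P hP => ⟨hP.1, hx, hP.2⟩, fun ⟨_, _, hx, _⟩ => hx⟩
  rw [hX, card_biUnion (t := (X ∩ ·)) fun P hP P' hP' hne =>
    (h𝒜 hP hP' hne).mono inter_subset_right inter_subset_right]
  exact (sum_congr rfl h.1).trans (by simp)

theorem isTransversal_union_iff (hT : Disjoint T₁ T₂) (h₁ : ∀ P ∈ 𝒜₁, P ⊆ T₁)
    (h₂ : ∀ P ∈ 𝒜₂, P ⊆ T₂) :
    IsTransversal (𝒜₁ ∪ 𝒜₂) X ↔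
      X ⊆ T₁ ∪ T₂ ∧ IsTransversal 𝒜₁ (X ∩ T₁) ∧ IsTransversal 𝒜₂ (X ∩ T₂) := by
  have hinter : ∀ {P T}, P ⊆ T → X ∩ T ∩ P = X ∩ P := fun hPT => by
    rw [inter_assoc, inter_eq_right.2 hPT]
  constructor
  · rintro ⟨hcard, hcov⟩
    refine ⟨fun x hx => ?_, ⟨fun P hP => ?_, fun x hx => ?_⟩, ⟨fun P hP => ?_, fun x hx => ?_⟩⟩
    · obtain ⟨P, hP, hxP⟩ := hcov x hx
      rcases mem_union.1 hP with hP | hP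
      exacts [mem_union_left _ (h₁ P hP hxP), mem_union_right _ (h₂ P hP hxP)]
    · rw [hinter (h₁ P hP)]; exact hcard P (mem_union_left _ hP)
    · obtain ⟨P, hP, hxP⟩ := hcov x (mem_inter.1 hx).1
      refine ⟨P, (mem_union.1 hP).resolve_right fun hP₂ => ?_, hxP⟩
      exact disjoint_left.1 hT (mem_inter.1 hx).2 (h₂ P hP₂ hxP)
    · rw [hinter (h₂ P hP)]; exact hcard P (mem_union_right _ hP)
    · obtain ⟨P, hP, hxP⟩ := hcov x (mem_inter.1 hx).1
      refine ⟨P, (mem_union.1 hP).resolve_left fun hP₁ => ?_, hxP⟩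
      exact disjoint_left.1 hT (h₁ P hP₁ hxP) (mem_inter.1 hx).2
  · rintro ⟨hX, ⟨hcard₁, hcov₁⟩, ⟨hcard₂, hcov₂⟩⟩
    refine ⟨fun P hP => ?_, fun x hx => ?_⟩
    · rcases mem_union.1 hP with hP | hP
      · rw [← hinter (h₁ P hP)]; exact hcard₁ P hP
      · rw [← hinter (h₂ P hP)]; exact hcard₂ P hP
    · rcases mem_union.1 (hX hx) with hxT | hxT
      · obtain ⟨P, hP, hxP⟩ := hcov₁ x (mem_inter.2 ⟨hx, hxT⟩)
        exact ⟨P, mem_union_left _ hP, hxP⟩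
      · obtain ⟨P, hP, hxP⟩ := hcov₂ x (mem_inter.2 ⟨hx, hxT⟩)
        exact ⟨P, mem_union_right _ hP, hxP⟩

theorem isTransversal_insert_iff (hQ : ∀ P ∈ 𝒜, Disjoint Q P) :
    IsTransversal (insert Q 𝒜) X ↔ ∃ q ∈ X ∩ Q, IsTransversal 𝒜 (X.erase q) := by
  have herase : ∀ {q P}, q ∈ Q → P ∈ 𝒜 → X.erase q ∩ P = X ∩ P := fun hq hP => by
    rw [erase_inter, erase_eq_of_notMem fun h => disjoint_left.1 (hQ _ hP) hq (mem_inter.1 h).2]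
  constructor
  · rintro ⟨hcard, hcov⟩
    obtain ⟨q, hq⟩ := card_eq_one.1 (hcard Q (mem_insert_self Q 𝒜))
    have hqQ : q ∈ X ∩ Q := hq ▸ mem_singleton_self q
    refine ⟨q, hqQ, fun P hP => ?_, fun x hx => ?_⟩
    · rw [herase (mem_inter.1 hqQ).2 hP]; exact hcard P (mem_insert_of_mem hP)
    · obtain ⟨hxq, hxX⟩ := mem_erase.1 hx
      obtain ⟨P, hP, hxP⟩ := hcov x hxX
      rcases mem_insert.1 hP with rfl | hP
      · exact absurd (mem_singleton.1 (hq ▸ mem_inter.2 ⟨hxX, hxP⟩)) hxq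
      · exact ⟨P, hP, hxP⟩
  · rintro ⟨q, hqQ, hcard, hcov⟩
    have hXQ : X ∩ Q = {q} := by
      refine eq_singleton_iff_unique_mem.2 ⟨hqQ, fun x hx => by_contra fun hxq => ?_⟩
      obtain ⟨P, hP, hxP⟩ := hcov x (mem_erase.2 ⟨hxq, (mem_inter.1 hx).1⟩)
      exact disjoint_left.1 (hQ P hP) (mem_inter.1 hx).2 hxP
    refine ⟨fun P hP => ?_, fun x hx => ?_⟩
    · rcases mem_insert.1 hP with rfl | hP
      · rw [hXQ, card_singleton]
      · rw [← herase (mem_inter.1 hqQ).2 hP]; exact hcard P hP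
    · by_cases hxq : x = q
      · exact ⟨Q, mem_insert_self Q 𝒜, hxq ▸ (mem_inter.1 hqQ).2⟩
      · obtain ⟨P, hP, hxP⟩ := hcov x (mem_erase.2 ⟨hxq, hx⟩)
        exact ⟨P, mem_insert_of_mem hP, hxP⟩

theorem isTransversal_insert_union_union_iff (hT : Disjoint T₁ T₂)
    (h₁ : ∀ P ∈ 𝒜₁, P ⊆ T₁) (h₂ : ∀ P ∈ 𝒜₂, P ⊆ T₂) (hQ₁ : Q₁ ⊆ T₁) (hQ₂ : Q₂ ⊆ T₂)
    (hQP₁ : ∀ P ∈ 𝒜₁, Disjoint Q₁ P) (hQP₂ : ∀ P ∈ 𝒜₂, Disjoint Q₂ P) :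
    IsTransversal (insert (Q₁ ∪ Q₂) (𝒜₁ ∪ 𝒜₂)) X ↔
      IsTransversal (insert Q₁ 𝒜₁ ∪ 𝒜₂) X ∨ IsTransversal (𝒜₁ ∪ insert Q₂ 𝒜₂) X := by
  have hdisj₁ : ∀ P ∈ 𝒜₁ ∪ 𝒜₂, Disjoint Q₁ P := fun P hP => (mem_union.1 hP).elim (hQP₁ P)
    fun hP => hT.mono hQ₁ (h₂ P hP)
  have hdisj₂ : ∀ P ∈ 𝒜₁ ∪ 𝒜₂, Disjoint Q₂ P := fun P hP => (mem_union.1 hP).elim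
    (fun hP => hT.symm.mono hQ₂ (h₁ P hP)) (hQP₂ P)
  rw [insert_union, union_insert, isTransversal_insert_iff hdisj₁, isTransversal_insert_iff hdisj₂,
    isTransversal_insert_iff fun P hP => disjoint_union_left.2 ⟨hdisj₁ P hP, hdisj₂ P hP⟩,
    inter_union_distrib_left]
  simp only [mem_union, or_and_right, exists_or]

theorem isTransversal_image_singleton_iff {e : Finset α} :
    IsTransversal (e.image ({·})) X ↔ X = e := by
  refine ⟨fun ⟨hcard, hcov⟩ => ?_, ?_⟩
  · ext x
    refine ⟨fun hx => ?_, fun hx => by_contra fun hxX => ?_⟩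
    · obtain ⟨P, hP, hxP⟩ := hcov x hx
      obtain ⟨y, hy, rfl⟩ := mem_image.1 hP
      exact mem_singleton.1 hxP ▸ hy
    · have h := hcard {x} (mem_image_of_mem _ hx)
      rw [inter_singleton_of_notMem hxX, card_empty] at h
      exact zero_ne_one h
  · rintro rfl
    refine ⟨fun P hP => ?_, fun x hx => ⟨{x}, mem_image_of_mem _ hx, mem_singleton_self x⟩⟩
    obtain ⟨x, hx, rfl⟩ := mem_image.1 hP
    rw [inter_singleton_of_mem hx, card_singleton]

theorem card_eq_card_inter_add_card_inter (hT : Disjoint T₁ T₂) (hX : X ⊆ T₁ ∪ T₂) :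
    X.card = (X ∩ T₁).card + (X ∩ T₂).card := by
  rw [← card_union_of_disjoint (hT.mono inter_subset_right inter_subset_right),
    ← inter_union_distrib_left, inter_eq_left.2 hX]

end Transversal

section Blocks

variable {V V₁ V₂ : Finset ℕ} {r r₁ r₂ : ℕ} {X : Finset ℕ}

theorem Block.mem_edges_iff (B : Block V r) :
    X ∈ B.edges ↔ IsTransversal (univ.image B.parts) X := by
  simp [Block.edges, IsTransversal]

theorem Block.subset_of_mem_edges (B : Block V r) (hX : X ∈ B.edges) : X ⊆ V := fun x hx =>
  let ⟨i, hi⟩ := hX.2 x hx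
  B.subset i hi

theorem Block.parts_injective (B : Block V r) : Function.Injective B.parts := fun i j h => by
  by_contra hij
  have hdisj := B.disj i j hij
  rw [← h, disjoint_self_iff_empty] at hdisj
  exact (B.nonempty i).ne_empty hdisj

theorem Block.pairwiseDisjoint_parts (B : Block V r) :
    ((univ.image B.parts : Finset (Finset ℕ)) : Set (Finset ℕ)).PairwiseDisjoint id := by
  rintro _ hP _ hQ hne
  simp only [coe_image, coe_univ, Set.image_univ, Set.mem_range] at hP hQ
  obtain ⟨i, rfl⟩ := hP
  obtain ⟨j, rfl⟩ := hQ
  exact B.disj i j fun h => hne (h ▸ rfl)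

noncomputable def Block.ofFinset (𝒜 : Finset (Finset ℕ)) (hr : 𝒜.card = r)
    (hne : ∀ P ∈ 𝒜, P.Nonempty) (hV : ∀ P ∈ 𝒜, P ⊆ V)
    (hdisj : (𝒜 : Set (Finset ℕ)).PairwiseDisjoint id) : Block V r where
  parts i := 𝒜.equivFin.symm (i.cast hr.symm)
  nonempty i := hne _ (Subtype.prop _)
  subset i := hV _ (Subtype.prop _)
  disj i j hij := hdisj (Subtype.prop _) (Subtype.prop _)
    (Subtype.val_injective.ne (𝒜.equivFin.symm.injective.ne (by simpa [Fin.ext_iff] using hij)))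

theorem Block.ofFinset_edges {𝒜 : Finset (Finset ℕ)} {hr : 𝒜.card = r} {hne} {hV} {hdisj} :
    (Block.ofFinset (V := V) 𝒜 hr hne hV hdisj).edges = {X | IsTransversal 𝒜 X} := by
  have himage : univ.image (Block.ofFinset (V := V) 𝒜 hr hne hV hdisj).parts = 𝒜 := by
    ext P
    simp only [Block.ofFinset, mem_image, mem_univ, true_and]
    refine ⟨fun ⟨i, hi⟩ => hi ▸ Subtype.prop _, fun hP => ⟨(𝒜.equivFin ⟨P, hP⟩).cast hr, ?_⟩⟩
    simp
  ext X
  rw [Block.mem_edges_iff, himage, Set.mem_ofPred_eq]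

noncomputable def Block.ofTransversal (𝒜 : Finset (Finset ℕ)) (hV : ∀ P ∈ 𝒜, P ⊆ V)
    (hdisj : (𝒜 : Set (Finset ℕ)).PairwiseDisjoint id) (h : ∃ X, IsTransversal 𝒜 X ∧ X.card = r) :
    Block V r :=
  Block.ofFinset 𝒜 (h.elim fun _ hX => (hX.1.card_eq hdisj).symm.trans hX.2)
    (fun _ hP => h.elim fun _ hX => hX.1.nonempty hP) hV hdisj

noncomputable def Block.prod (u : Block V₁ r₁) (v : Block V₂ r₂) (hV : Disjoint V₁ V₂) :
    Block (V₁ ∪ V₂) (r₁ + r₂) :=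
  Block.ofFinset (univ.image u.parts ∪ univ.image v.parts)
    (by
      rw [card_union_of_disjoint, card_image_of_injective _ u.parts_injective,
        card_image_of_injective _ v.parts_injective, card_univ, card_univ, Fintype.card_fin,
        Fintype.card_fin]
      simp only [disjoint_left, mem_image, mem_univ, true_and]
      rintro _ ⟨i, rfl⟩ ⟨j, hj⟩
      obtain ⟨x, hx⟩ := u.nonempty i
      exact disjoint_left.1 hV (u.subset i hx) (v.subset j (hj ▸ hx)))
    (by simp only [mem_union, mem_image, mem_univ, true_and]
        rintro _ (⟨i, rfl⟩ | ⟨j, rfl⟩)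
        exacts [u.nonempty i, v.nonempty j])
    (by simp only [mem_union, mem_image, mem_univ, true_and]
        rintro _ (⟨i, rfl⟩ | ⟨j, rfl⟩)
        exacts [(u.subset i).trans subset_union_left, (v.subset j).trans subset_union_right])
    (by
      rw [coe_union, Set.pairwiseDisjoint_union]
      refine ⟨u.pairwiseDisjoint_parts, v.pairwiseDisjoint_parts, ?_⟩
      simp only [coe_image, coe_univ, Set.image_univ, Set.mem_range]
      rintro _ ⟨i, rfl⟩ _ ⟨j, rfl⟩ -
      exact hV.mono (u.subset i) (v.subset j))

theorem Block.mem_prod_edges_iff (u : Block V₁ r₁) (v : Block V₂ r₂) (hV : Disjoint V₁ V₂) :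
    X ∈ (u.prod v hV).edges ↔ X ⊆ V₁ ∪ V₂ ∧ X ∩ V₁ ∈ u.edges ∧ X ∩ V₂ ∈ v.edges := by
  rw [Block.prod, Block.ofFinset_edges, Set.mem_ofPred_eq, u.mem_edges_iff, v.mem_edges_iff]
  refine isTransversal_union_iff hV ?_ ?_ <;>
    simp only [mem_image, mem_univ, true_and] <;> rintro _ ⟨i, rfl⟩
  exacts [u.subset i, v.subset i]

def Block.map (e : ℕ ↪ ℕ) (B : Block V r) : Block (V.map e) r where
  parts i := (B.parts i).map e
  nonempty i := (B.nonempty i).map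
  subset i := map_subset_map.2 (B.subset i)
  disj i j hij := (disjoint_map e).2 (B.disj i j hij)

theorem Block.map_edges (e : ℕ ↪ ℕ) (B : Block V r) :
    (B.map e).edges = Finset.map e '' B.edges := by
  have hmap : ∀ Y, Y.map e ∈ (B.map e).edges ↔ Y ∈ B.edges := fun Y => by
    simp only [Block.edges, Block.map, Set.mem_ofPred_eq, ← map_inter, card_map]
    simp
  ext X
  refine ⟨fun hX => ?_, fun ⟨Y, hY, hYX⟩ => hYX ▸ (hmap Y).2 hY⟩
  obtain ⟨Y, -, rfl⟩ := subset_map_iff.1 ((B.map e).subset_of_mem_edges hX)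
  exact ⟨Y, (hmap Y).1 hX, rfl⟩

end Blocks

section ExactCover

variable {V V₁ V₂ : Finset ℕ} {r r₁ r₂ k k₁ k₂ : ℕ} {F F₁ F₂ : Set (Finset ℕ)}

theorem ExactCover.of_fintype {ι : Type*} [Fintype ι] (B : ι → Block V r)
    (hdisj : Pairwise fun i j => Disjoint (B i).edges (B j).edges) (hcov : ⋃ i, (B i).edges = F) :
    ExactCover V r (Fintype.card ι) F := by
  let σ := (Fintype.equivFin ι).symm
  refine ⟨B ∘ σ, fun i j hij => hdisj (σ.injective.ne hij), ?_⟩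
  rw [← hcov]
  exact σ.surjective.iUnion_comp fun i => (B i).edges

theorem ExactCover.of_fibers {β : Type*} (φ : Finset ℕ → β) (D : Finset β) (B : D → Block V r)
    (hB : ∀ p, (B p).edges = {X | X ∈ F ∧ φ X = p}) (hD : ∀ X ∈ F, φ X ∈ D) :
    ExactCover V r D.card F := by
  have h := ExactCover.of_fintype B (F := F) ?_ ?_
  · rwa [Fintype.card_coe] at h
  · intro p q hpq
    simp only [hB]
    exact Set.disjoint_left.2 fun X hp hq => hpq (Subtype.ext (hp.2.symm.trans hq.2))
  · ext X
    simp only [hB, Set.mem_iUnion, Set.mem_ofPred_eq]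
    exact ⟨fun ⟨_, hX, _⟩ => hX, fun hX => ⟨⟨φ X, hD X hX⟩, hX, rfl⟩⟩

theorem ExactCover.union (h₁ : ExactCover V r k₁ F₁) (h₂ : ExactCover V r k₂ F₂)
    (hF : Disjoint F₁ F₂) : ExactCover V r (k₁ + k₂) (F₁ ∪ F₂) := by
  obtain ⟨B₁, hd₁, rfl⟩ := h₁
  obtain ⟨B₂, hd₂, rfl⟩ := h₂
  have h := ExactCover.of_fintype (Sum.elim B₁ B₂) ?_ Set.iUnion_sum
  · rwa [Fintype.card_sum, Fintype.card_fin, Fintype.card_fin] at h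
  rintro (i | i) (j | j) hij
  · exact hd₁ i j fun h => hij (congrArg _ h)
  · exact hF.mono (Set.subset_iUnion (fun i => (B₁ i).edges) i)
      (Set.subset_iUnion (fun j => (B₂ j).edges) j)
  · exact (hF.mono (Set.subset_iUnion (fun j => (B₁ j).edges) j)
      (Set.subset_iUnion (fun i => (B₂ i).edges) i)).symm
  · exact hd₂ i j fun h => hij (congrArg _ h)

theorem ExactCover.union_of_pred {p q : Finset ℕ → Prop}
    (h₁ : ExactCover V r k₁ {X | X ⊆ V ∧ X.card = r ∧ p X})
    (h₂ : ExactCover V r k₂ {X | X ⊆ V ∧ X.card = r ∧ q X})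
    (hpq : ∀ X ⊆ V, X.card = r → p X → ¬ q X) :
    ExactCover V r (k₁ + k₂) {X | X ⊆ V ∧ X.card = r ∧ (p X ∨ q X)} := by
  convert h₁.union h₂ (Set.disjoint_left.2 fun X ⟨hX, hc, hp⟩ ⟨_, _, hq⟩ => hpq X hX hc hp hq)
    using 1
  ext X
  simp only [Set.mem_union, Set.mem_ofPred_eq]
  tauto

theorem ExactCover.prod (h₁ : ExactCover V₁ r₁ k₁ F₁) (h₂ : ExactCover V₂ r₂ k₂ F₂)
    (hV : Disjoint V₁ V₂) :
    ExactCover (V₁ ∪ V₂) (r₁ + r₂) (k₁ * k₂)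
      {X | X ⊆ V₁ ∪ V₂ ∧ X ∩ V₁ ∈ F₁ ∧ X ∩ V₂ ∈ F₂} := by
  obtain ⟨B₁, hd₁, rfl⟩ := h₁
  obtain ⟨B₂, hd₂, rfl⟩ := h₂
  have h := ExactCover.of_fintype (fun ij : Fin k₁ × Fin k₂ => (B₁ ij.1).prod (B₂ ij.2) hV)
    (F := {X | X ⊆ V₁ ∪ V₂ ∧ X ∩ V₁ ∈ ⋃ i, (B₁ i).edges ∧ X ∩ V₂ ∈ ⋃ i, (B₂ i).edges}) ?_ ?_
  · rwa [Fintype.card_prod, Fintype.card_fin, Fintype.card_fin] at h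
  · rintro ⟨i, j⟩ ⟨i', j'⟩ hne
    refine Set.disjoint_left.2 fun X hX hX' => ?_
    rw [Block.mem_prod_edges_iff] at hX hX'
    by_cases hi : i = i'
    · subst hi
      exact Set.disjoint_left.1 (hd₂ j j' fun hj => hne (hj ▸ rfl)) hX.2.2 hX'.2.2
    · exact Set.disjoint_left.1 (hd₁ i i' hi) hX.2.1 hX'.2.1
  · ext X
    simp only [Set.mem_iUnion, Block.mem_prod_edges_iff, Prod.exists, Set.mem_ofPred_eq]
    constructor
    · rintro ⟨i, j, hX, hi, hj⟩
      exact ⟨hX, ⟨i, hi⟩, ⟨j, hj⟩⟩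
    · rintro ⟨hX, ⟨i, hi⟩, ⟨j, hj⟩⟩
      exact ⟨i, j, hX, hi, hj⟩

theorem ExactCover.prod_complete (h₁ : ExactCover V₁ r₁ k₁ {X | X ⊆ V₁ ∧ X.card = r₁})
    (h₂ : ExactCover V₂ r₂ k₂ {X | X ⊆ V₂ ∧ X.card = r₂}) (hV : Disjoint V₁ V₂) :
    ExactCover (V₁ ∪ V₂) (r₁ + r₂) (k₁ * k₂)
      {X | X ⊆ V₁ ∪ V₂ ∧ X.card = r₁ + r₂ ∧ (X ∩ V₁).card = r₁} := by
  convert h₁.prod h₂ hV using 1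
  ext X
  simp only [Set.mem_ofPred_eq, inter_subset_right, true_and]
  constructor
  · rintro ⟨hX, hcard, h₁⟩
    rw [card_eq_card_inter_add_card_inter hV hX] at hcard
    exact ⟨hX, h₁, by omega⟩
  · rintro ⟨hX, h₁, h₂⟩
    exact ⟨hX, by rw [card_eq_card_inter_add_card_inter hV hX, h₁, h₂], h₁⟩

theorem ExactCover.map (e : ℕ ↪ ℕ) (h : ExactCover V r k F) :
    ExactCover (V.map e) r k (Finset.map e '' F) := by
  obtain ⟨B, hd, rfl⟩ := h
  refine ⟨fun i => (B i).map e, fun i j hij => ?_, ?_⟩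
  · simp only [Block.map_edges]
    exact (Set.disjoint_image_iff (map_injective e)).2 (hd i j hij)
  · simp only [Block.map_edges, Set.image_iUnion]

theorem exactCover_singletons (V : Finset ℕ) (r : ℕ) :
    ExactCover V r (V.powersetCard r).card {X | X ⊆ V ∧ X.card = r} := by
  refine ExactCover.of_fibers id _ (fun e => Block.ofTransversal (e.1.image ({·})) ?_ ?_ ?_)
    (fun e => ?_) fun X hX => mem_powersetCard.2 hX
  all_goals obtain ⟨heV, her⟩ := mem_powersetCard.1 e.2
  · simpa only [forall_mem_image, singleton_subset_iff] using fun x hx => heV hx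
  · simp only [coe_image]
    rintro _ ⟨x, -, rfl⟩ _ ⟨y, -, rfl⟩ hxy
    exact disjoint_singleton.2 fun h => hxy (h ▸ rfl)
  · exact ⟨e, isTransversal_image_singleton_iff.2 rfl, her⟩
  · ext X
    rw [Block.ofTransversal, Block.ofFinset_edges, Set.mem_ofPred_eq,
      isTransversal_image_singleton_iff]
    exact ⟨fun h => ⟨h ▸ ⟨heV, her⟩, h⟩, And.right⟩

theorem exactCover_f (r n : ℕ) :
    ExactCover (range n) r (f r n) {X | X ⊆ range n ∧ X.card = r} := by
  have hne : {k | ExactCover (range n) r k {X | X ⊆ range n ∧ X.card = r}}.Nonempty :=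
    ⟨_, exactCover_singletons _ r⟩
  exact Nat.sInf_mem hne

theorem f_le_of_exactCover {n : ℕ} (h : ExactCover (range n) r k {X | X ⊆ range n ∧ X.card = r}) :
    f r n ≤ k :=
  Nat.sInf_le h

theorem exactCover_map_range (e : ℕ ↪ ℕ) (r n : ℕ) :
    ExactCover ((range n).map e) r (f r n) {X | X ⊆ (range n).map e ∧ X.card = r} := by
  convert (exactCover_f r n).map e using 1
  ext X
  simp only [Set.mem_image, Set.mem_ofPred_eq]
  constructor
  · rintro ⟨hX, hcard⟩
    obtain ⟨Y, hY, rfl⟩ := subset_map_iff.1 hX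
    exact ⟨Y, ⟨hY, by rwa [card_map] at hcard⟩, rfl⟩
  · rintro ⟨Y, ⟨hY, hcard⟩, rfl⟩
    exact ⟨map_subset_map.2 hY, by rw [card_map, hcard]⟩

end ExactCover

section Evens

variable {α : Type*} [LinearOrder α] {Y : Finset α} {q y : α}

def evens (Y : Finset α) : Finset α := Y.filter fun y => Even (Y.filter (· ≤ y)).card

theorem evens_subset (Y : Finset α) : evens Y ⊆ Y := filter_subset _ _

theorem evens_inter_subset_right (X T : Finset α) : evens (X ∩ T) ⊆ T :=
  (evens_subset _).trans inter_subset_right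

theorem evens_insert_of_forall_lt (hq : ∀ y ∈ Y, y < q) :
    evens (insert q Y) = if Even (Y.card + 1) then insert q (evens Y) else evens Y := by
  have hqY : q ∉ Y := fun h => lt_irrefl q (hq q h)
  have htop : (insert q Y).filter (· ≤ q) = insert q Y :=
    filter_true_of_mem fun y hy => (mem_insert.1 hy).elim le_of_eq fun h => (hq y h).le
  have hrank : ∀ y ∈ Y, (insert q Y).filter (· ≤ y) = Y.filter (· ≤ y) := fun y hy => by
    rw [filter_insert, if_neg (not_le.2 (hq y hy))]
  ext t
  rcases eq_or_ne t q with rfl | htq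
  · simp only [evens, mem_filter, mem_insert_self, true_and, htop, card_insert_of_notMem hqY]
    split_ifs with h <;> simp [h, hqY]
  · have hrank' : t ∈ Y → (insert q Y).filter (· ≤ t) = Y.filter (· ≤ t) := hrank t
    simp only [evens, mem_filter, mem_insert, htq, false_or]
    split_ifs <;> simp only [mem_insert, mem_filter, htq, false_or] <;>
      exact and_congr_right fun ht => by rw [hrank' ht]

theorem card_evens (Y : Finset α) : (evens Y).card = Y.card / 2 := by
  induction Y using Finset.induction_on_max with
  | empty => simp [evens]
  | insert q Y hq ih =>
    have hqY : q ∉ Y := fun h => lt_irrefl q (hq q h)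
    rw [evens_insert_of_forall_lt hq, card_insert_of_notMem hqY]
    split_ifs with h
    · rw [card_insert_of_notMem fun h' => hqY (evens_subset Y h'), ih]
      obtain ⟨k, hk⟩ := h
      omega
    · rw [Nat.even_add_one, not_not] at h
      obtain ⟨k, hk⟩ := h
      omega

theorem exists_mem_evens_ge (hY : Even Y.card) (hy : y ∈ Y) : ∃ s ∈ evens Y, y ≤ s := by
  refine ⟨Y.max' ⟨y, hy⟩, mem_filter.2 ⟨max'_mem _ _, ?_⟩, le_max' Y y hy⟩
  rwa [filter_true_of_mem fun z hz => le_max' Y z hz]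

end Evens

section Chain

variable {α : Type*} [LinearOrder α] {T S T₁ S₁ T₂ S₂ X Y W P : Finset α} {s t : α}

def gapBelow (T S : Finset α) (s : α) : Finset α :=
  T.filter fun x => x < s ∧ ∀ t ∈ S, t < s → t < x

def chainParts (T S : Finset α) : Finset (Finset α) :=
  S.image ({·}) ∪ S.image (gapBelow T S)

def above (T S : Finset α) : Finset α := T.filter fun x => ∀ s ∈ S, s < x

theorem above_subset : above T S ⊆ T := filter_subset _ _

theorem mem_gapBelow {x : α} : x ∈ gapBelow T S s ↔ x ∈ T ∧ x < s ∧ ∀ t ∈ S, t < s → t < x :=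
  mem_filter

theorem notMem_gapBelow (ht : t ∈ S) : t ∉ gapBelow T S s := fun h =>
  lt_irrefl t ((mem_gapBelow.1 h).2.2 t ht (mem_gapBelow.1 h).2.1)

theorem disjoint_gapBelow (hs : s ∈ S) (ht : t ∈ S) (hst : s ≠ t) :
    Disjoint (gapBelow T S s) (gapBelow T S t) := by
  wlog h : s < t generalizing s t
  · exact (this ht hs hst.symm (lt_of_le_of_ne (not_lt.1 h) hst.symm)).symm
  exact disjoint_left.2 fun x hxs hxt =>
    lt_asymm (mem_gapBelow.1 hxs).2.1 ((mem_gapBelow.1 hxt).2.2 s hs h)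

theorem pairwiseDisjoint_chainParts : (chainParts T S : Set (Finset α)).PairwiseDisjoint id := by
  simp only [chainParts, coe_union, coe_image]
  rintro _ (⟨s, hs, rfl⟩ | ⟨s, hs, rfl⟩) _ (⟨t, ht, rfl⟩ | ⟨t, ht, rfl⟩) hne
  · exact disjoint_singleton.2 fun h => hne (h ▸ rfl)
  · exact disjoint_singleton_left.2 (notMem_gapBelow hs)
  · exact disjoint_singleton_right.2 (notMem_gapBelow ht)
  · exact disjoint_gapBelow hs ht fun h => hne (h ▸ rfl)

theorem subset_of_mem_chainParts (hS : S ⊆ T) (hP : P ∈ chainParts T S) : P ⊆ T := by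
  rcases mem_union.1 hP with hP | hP <;> obtain ⟨s, hs, rfl⟩ := mem_image.1 hP
  exacts [singleton_subset_iff.2 (hS hs), filter_subset _ _]

theorem disjoint_above_of_mem_chainParts (hP : P ∈ chainParts T S) : Disjoint (above T S) P := by
  rcases mem_union.1 hP with hP | hP <;> obtain ⟨s, hs, rfl⟩ := mem_image.1 hP
  · exact disjoint_singleton_right.2 fun h => lt_irrefl s ((mem_filter.1 h).2 s hs)
  · exact disjoint_left.2 fun x hx hx' =>
      lt_asymm ((mem_filter.1 hx).2 s hs) (mem_gapBelow.1 hx').2.1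

theorem isTransversal_chainParts_iff' :
    IsTransversal (chainParts T S) Y ↔ S ⊆ Y ∧ (∀ s ∈ S, (Y ∩ gapBelow T S s).card = 1) ∧
      ∀ y ∈ Y, y ∈ S ∨ ∃ s ∈ S, y ∈ gapBelow T S s := by
  have hsingle : ∀ s, (Y ∩ {s}).card = 1 ↔ s ∈ Y := fun s => by
    by_cases hs : s ∈ Y <;> simp [hs, inter_singleton_of_mem, inter_singleton_of_notMem]
  simp only [IsTransversal, chainParts, forall_mem_union, forall_mem_image, hsingle]
  simp only [mem_union, or_and_right, exists_or, exists_mem_image, mem_singleton, exists_eq_right',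
    subset_iff, and_assoc]

theorem card_filter_eq_sum_of_chain (hSY : S ⊆ Y)
    (hcov : ∀ y ∈ Y, y ∈ S ∨ ∃ s ∈ S, y ∈ gapBelow T S s) (p : α → Prop) [DecidablePred p]
    (hp : ∀ s ∈ S, ∀ x ∈ gapBelow T S s, p x ↔ p s) :
    (Y.filter p).card = ∑ s ∈ S.filter p, ((Y ∩ gapBelow T S s).card + 1) := by
  have hY : Y.filter p = (S.filter p).biUnion fun s => insert s (Y ∩ gapBelow T S s) := by
    ext y
    simp only [mem_filter, mem_biUnion, mem_insert, mem_inter]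
    constructor
    · rintro ⟨hy, hpy⟩
      obtain hyS | ⟨s, hs, hys⟩ := hcov y hy
      · exact ⟨y, ⟨hyS, hpy⟩, Or.inl rfl⟩
      · exact ⟨s, ⟨hs, (hp s hs y hys).1 hpy⟩, Or.inr ⟨hy, hys⟩⟩
    · rintro ⟨s, ⟨hs, hps⟩, rfl | ⟨hy, hys⟩⟩
      exacts [⟨hSY hs, hps⟩, ⟨hy, (hp s hs y hys).2 hps⟩]
  rw [hY, card_biUnion]
  · exact sum_congr rfl fun s hs =>
      card_insert_of_notMem fun h => notMem_gapBelow (mem_filter.1 hs).1 (mem_inter.1 h).2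
  · intro s hs t ht hst
    have hs := (mem_filter.1 hs).1
    have ht := (mem_filter.1 ht).1
    refine disjoint_insert_left.2 ⟨?_, disjoint_insert_right.2 ⟨?_, ?_⟩⟩
    · simp only [mem_insert, mem_inter, not_or]
      exact ⟨hst, fun h => notMem_gapBelow hs h.2⟩
    · exact fun h => notMem_gapBelow ht (mem_inter.1 h).2
    · exact (disjoint_gapBelow hs ht hst).mono inter_subset_right inter_subset_right

theorem inter_gapBelow_nonempty (hYT : Y ⊆ T) (hs : s ∈ evens Y) :
    (Y ∩ gapBelow T (evens Y) s).Nonempty := by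
  have hsY := evens_subset Y hs
  have hrank := (mem_filter.1 hs).2
  have hlt : (Y.filter (· < s)).Nonempty := by
    by_contra h
    have hsingle : Y.filter (· ≤ s) = {s} := by
      refine eq_singleton_iff_unique_mem.2 ⟨mem_filter.2 ⟨hsY, le_rfl⟩, fun z hz => ?_⟩
      obtain ⟨hzY, hzs⟩ := mem_filter.1 hz
      exact hzs.eq_or_lt.resolve_right fun hzs => h ⟨z, mem_filter.2 ⟨hzY, hzs⟩⟩
    rw [hsingle, card_singleton] at hrank
    exact Nat.not_even_one hrank
  set y := (Y.filter (· < s)).max' hlt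
  obtain ⟨hyY, hys⟩ := mem_filter.1 (max'_mem _ hlt)
  have hle : ∀ z ∈ Y, z < s → z ≤ y := fun z hz hzs => le_max' _ z (mem_filter.2 ⟨hz, hzs⟩)
  refine ⟨y, mem_inter.2 ⟨hyY, mem_gapBelow.2 ⟨hYT hyY, hys, fun t ht hts =>
    (hle t (evens_subset Y ht) hts).lt_of_ne fun hty => ?_⟩⟩⟩
  -- `y` is the predecessor of `s` in `Y`, so their ranks differ by one and cannot both be even
  have hsucc : Y.filter (· ≤ s) = insert s (Y.filter (· ≤ y)) := by
    ext z
    simp only [mem_filter, mem_insert]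
    constructor
    · rintro ⟨hz, hzs⟩
      exact hzs.eq_or_lt.imp id fun h => ⟨hz, hle z hz h⟩
    · rintro (rfl | ⟨hz, hzy⟩)
      exacts [⟨hsY, le_rfl⟩, ⟨hz, hzy.trans hys.le⟩]
  have hsy : s ∉ Y.filter (· ≤ y) := fun h => not_le.2 hys (mem_filter.1 h).2
  rw [hsucc, card_insert_of_notMem hsy, Nat.even_add_one] at hrank
  exact hrank (hty ▸ (mem_filter.1 ht).2)

theorem mem_evens_or_mem_gapBelow {y : α} (hYT : Y ⊆ T) (hY : Even Y.card) (hy : y ∈ Y) :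
    y ∈ evens Y ∨ ∃ s ∈ evens Y, y ∈ gapBelow T (evens Y) s := by
  obtain ⟨s₀, hs₀, hys₀⟩ := exists_mem_evens_ge hY hy
  have hne : ((evens Y).filter (y ≤ ·)).Nonempty := ⟨s₀, mem_filter.2 ⟨hs₀, hys₀⟩⟩
  obtain ⟨hs, hys⟩ := mem_filter.1 (min'_mem _ hne)
  refine hys.eq_or_lt.imp (fun h : y = _ => h ▸ hs) fun hlt =>
    ⟨_, hs, mem_gapBelow.2 ⟨hYT hy, hlt, fun t ht hts => not_le.1 fun hyt => ?_⟩⟩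
  exact not_le.2 hts (min'_le _ t (mem_filter.2 ⟨ht, hyt⟩))

theorem isTransversal_chainParts_iff (hS : S ⊆ T) :
    IsTransversal (chainParts T S) Y ↔ Y ⊆ T ∧ Y.card = 2 * S.card ∧ evens Y = S := by
  rw [isTransversal_chainParts_iff']
  constructor
  · rintro ⟨hSY, hone, hcov⟩
    have hcount : ∀ (p : α → Prop) [DecidablePred p],
        (∀ s ∈ S, ∀ x ∈ gapBelow T S s, p x ↔ p s) → (Y.filter p).card = 2 * (S.filter p).card :=
      fun p _ hp => by
        rw [card_filter_eq_sum_of_chain hSY hcov p hp,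
          sum_congr rfl fun s hs => by rw [hone s (mem_filter.1 hs).1], sum_const, smul_eq_mul,
          mul_comm]
    have hcard : Y.card = 2 * S.card := by simpa using hcount (fun _ => True) (by simp)
    have hSev : S ⊆ evens Y := fun s hs => by
      refine mem_filter.2 ⟨hSY hs, ?_⟩
      rw [hcount (· ≤ s) fun t _ x hx => ⟨fun hxs => not_lt.1 fun hst =>
        not_le.2 ((mem_gapBelow.1 hx).2.2 s hs hst) hxs, fun hts =>
          ((mem_gapBelow.1 hx).2.1.le.trans hts)⟩]
      exact even_two_mul _
    refine ⟨fun y hy => ?_, hcard, (eq_of_subset_of_card_le hSev ?_).symm⟩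
    · obtain hyS | ⟨s, -, hys⟩ := hcov y hy
      exacts [hS hyS, (mem_gapBelow.1 hys).1]
    · rw [card_evens, hcard, Nat.mul_div_cancel_left _ two_pos]
  · rintro ⟨hYT, hcard, rfl⟩
    have hcov := fun y => mem_evens_or_mem_gapBelow hYT (hcard ▸ even_two_mul _) (y := y)
    -- the sets `insert s (Y ∩ gapBelow s)` partition `Y` into `|S|` pieces of total size `2 |S|`,
    -- and each of them has at least two elements
    have hsum := card_filter_eq_sum_of_chain (evens_subset Y) hcov (fun _ => True) (by simp)
    rw [filter_true, filter_true, hcard, mul_comm, ← smul_eq_mul, ← sum_const] at hsum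
    have hle : ∀ s ∈ evens Y, 2 ≤ (Y ∩ gapBelow T (evens Y) s).card + 1 := fun s hs =>
      Nat.succ_le_succ (card_pos.2 (inter_gapBelow_nonempty hYT hs))
    have hone := (sum_eq_sum_iff_of_le hle).1 hsum
    exact ⟨evens_subset Y, fun s hs => by have := hone s hs; omega, hcov⟩

theorem isTransversal_insert_above_chainParts_iff (hS : S ⊆ T) :
    IsTransversal (insert (above T S) (chainParts T S)) W ↔
      W ⊆ T ∧ W.card = 2 * S.card + 1 ∧ evens W = S := by
  have hodd : ¬ Even (2 * S.card + 1) := Nat.not_even_iff_odd.2 (odd_two_mul_add_one _)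
  rw [isTransversal_insert_iff fun P => disjoint_above_of_mem_chainParts]
  constructor
  · rintro ⟨q, hq, hW⟩
    obtain ⟨hqW, hqT, hqS⟩ : q ∈ W ∧ q ∈ T ∧ ∀ s ∈ S, s < q := by
      simpa only [mem_inter, above, mem_filter] using hq
    obtain ⟨hWT, hcard, hev⟩ := (isTransversal_chainParts_iff hS).1 hW
    have hlt : ∀ y ∈ W.erase q, y < q := fun y hy => by
      obtain ⟨s, hs, hys⟩ := exists_mem_evens_ge (hcard ▸ even_two_mul _) hy
      exact hys.trans_lt (hqS s (hev ▸ hs))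
    have hins := evens_insert_of_forall_lt hlt
    rw [insert_erase hqW, hcard, if_neg hodd, hev] at hins
    refine ⟨fun y hy => ?_, ?_, hins⟩
    · rcases eq_or_ne y q with rfl | hyq
      exacts [hqT, hWT (mem_erase.2 ⟨hyq, hy⟩)]
    · rw [← card_erase_add_one hqW, hcard]
  · rintro ⟨hWT, hcard, hev⟩
    have hne : W.Nonempty := card_pos.1 (by omega)
    have hlt : ∀ y ∈ W.erase (W.max' hne), y < W.max' hne := fun y hy =>
      lt_max'_of_mem_erase_max' W hne hy
    have hcard' : (W.erase (W.max' hne)).card = 2 * S.card := by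
      rw [card_erase_of_mem (max'_mem W hne), hcard, Nat.add_sub_cancel]
    have hins := evens_insert_of_forall_lt hlt
    rw [insert_erase (max'_mem W hne), hcard', if_neg hodd, hev] at hins
    refine ⟨W.max' hne, mem_inter.2 ⟨max'_mem W hne, mem_filter.2 ⟨hWT (max'_mem W hne),
      fun s hs => hlt s (evens_subset _ (hins ▸ hs))⟩⟩,
      (isTransversal_chainParts_iff hS).2 ⟨(erase_subset _ W).trans hWT, hcard', hins.symm⟩⟩

end Chain

section Gadget

variable {α : Type*} [LinearOrder α] {T₁ S₁ T₂ S₂ X : Finset α}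

def gadgetParts (T₁ S₁ T₂ S₂ : Finset α) : Finset (Finset α) :=
  insert (above T₁ S₁ ∪ above T₂ S₂) (chainParts T₁ S₁ ∪ chainParts T₂ S₂)

theorem isTransversal_gadgetParts_iff (hT : Disjoint T₁ T₂) (hS₁ : S₁ ⊆ T₁) (hS₂ : S₂ ⊆ T₂) :
    IsTransversal (gadgetParts T₁ S₁ T₂ S₂) X ↔
      X ⊆ T₁ ∪ T₂ ∧ evens (X ∩ T₁) = S₁ ∧ evens (X ∩ T₂) = S₂ ∧
        X.card = 2 * (S₁.card + S₂.card) + 1 := by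
  have hsub : ∀ {T S : Finset α}, S ⊆ T → ∀ P ∈ insert (above T S) (chainParts T S), P ⊆ T :=
    fun hS P hP => (mem_insert.1 hP).elim (· ▸ above_subset) (subset_of_mem_chainParts hS)
  rw [gadgetParts, isTransversal_insert_union_union_iff hT (fun _ => subset_of_mem_chainParts hS₁)
      (fun _ => subset_of_mem_chainParts hS₂) above_subset above_subset
      (fun _ => disjoint_above_of_mem_chainParts) (fun _ => disjoint_above_of_mem_chainParts),
    isTransversal_union_iff hT (hsub hS₁) (fun _ => subset_of_mem_chainParts hS₂),
    isTransversal_union_iff hT (fun _ => subset_of_mem_chainParts hS₁) (hsub hS₂),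
    isTransversal_insert_above_chainParts_iff hS₁, isTransversal_chainParts_iff hS₂,
    isTransversal_insert_above_chainParts_iff hS₂, isTransversal_chainParts_iff hS₁]
  simp only [inter_subset_right, true_and]
  constructor
  · rintro (⟨hX, ⟨h₁, e₁⟩, ⟨h₂, e₂⟩⟩ | ⟨hX, ⟨h₁, e₁⟩, ⟨h₂, e₂⟩⟩) <;>
      refine ⟨hX, e₁, e₂, ?_⟩ <;> rw [card_eq_card_inter_add_card_inter hT hX] <;> omega
  · rintro ⟨hX, e₁, e₂, hcard⟩
    have h₁ := card_evens (X ∩ T₁)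
    have h₂ := card_evens (X ∩ T₂)
    rw [e₁] at h₁
    rw [e₂] at h₂
    rw [card_eq_card_inter_add_card_inter hT hX] at hcard
    rcases Nat.even_or_odd (X ∩ T₁).card with ⟨a, ha⟩ | ⟨a, ha⟩
    · exact Or.inr ⟨hX, ⟨by omega, e₁⟩, ⟨by omega, e₂⟩⟩
    · exact Or.inl ⟨hX, ⟨by omega, e₁⟩, ⟨by omega, e₂⟩⟩

theorem subset_of_mem_gadgetParts (hS₁ : S₁ ⊆ T₁) (hS₂ : S₂ ⊆ T₂) {P : Finset α}
    (hP : P ∈ gadgetParts T₁ S₁ T₂ S₂) : P ⊆ T₁ ∪ T₂ := by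
  rcases mem_insert.1 hP with rfl | hP
  · exact union_subset_union above_subset above_subset
  · rcases mem_union.1 hP with hP | hP
    exacts [(subset_of_mem_chainParts hS₁ hP).trans subset_union_left,
      (subset_of_mem_chainParts hS₂ hP).trans subset_union_right]

theorem pairwiseDisjoint_gadgetParts (hT : Disjoint T₁ T₂) (hS₁ : S₁ ⊆ T₁) (hS₂ : S₂ ⊆ T₂) :
    (gadgetParts T₁ S₁ T₂ S₂ : Set (Finset α)).PairwiseDisjoint id := by
  rw [gadgetParts, coe_insert, Set.pairwiseDisjoint_insert, coe_union, Set.pairwiseDisjoint_union]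
  refine ⟨⟨pairwiseDisjoint_chainParts, pairwiseDisjoint_chainParts, fun P hP Q hQ _ =>
    hT.mono (subset_of_mem_chainParts hS₁ hP) (subset_of_mem_chainParts hS₂ hQ)⟩, fun P hP _ => ?_⟩
  rcases hP with hP | hP
  · exact disjoint_union_left.2 ⟨disjoint_above_of_mem_chainParts hP,
      hT.symm.mono above_subset (subset_of_mem_chainParts hS₁ hP)⟩
  · exact disjoint_union_left.2 ⟨hT.mono above_subset (subset_of_mem_chainParts hS₂ hP),
      disjoint_above_of_mem_chainParts hP⟩

theorem isTransversal_gadgetParts_evens_iff {X₀ : Finset α} (hT : Disjoint T₁ T₂)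
    (hX₀ : X₀ ⊆ T₁ ∪ T₂) (hodd : Odd X₀.card) :
    IsTransversal (gadgetParts T₁ (evens (X₀ ∩ T₁)) T₂ (evens (X₀ ∩ T₂))) X ↔
      X ⊆ T₁ ∪ T₂ ∧ X.card = X₀.card ∧ evens (X ∩ T₁) = evens (X₀ ∩ T₁) ∧
        evens (X ∩ T₂) = evens (X₀ ∩ T₂) := by
  rw [isTransversal_gadgetParts_iff hT (evens_inter_subset_right _ _)
    (evens_inter_subset_right _ _), card_evens, card_evens]
  have := card_eq_card_inter_add_card_inter hT hX₀
  obtain ⟨c, hc⟩ := hodd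
  constructor
  · rintro ⟨hX, e₁, e₂, hcard⟩
    exact ⟨hX, by omega, e₁, e₂⟩
  · rintro ⟨hX, hcard, e₁, e₂⟩
    exact ⟨hX, e₁, e₂, by omega⟩

theorem card_image_evens_le {E : Finset (Finset α)} (hT : Disjoint T₁ T₂) {k : ℕ} {J : Finset ℕ}
    (hE : ∀ X ∈ E, X ⊆ T₁ ∪ T₂ ∧ X.card = 2 * k + 1 ∧ (X ∩ T₁).card / 2 ∈ J) :
    (E.image fun X => (evens (X ∩ T₁), evens (X ∩ T₂))).card ≤
      ∑ a ∈ J, T₁.card.choose a * T₂.card.choose (k - a) := by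
  calc _ ≤ (J.biUnion fun a => T₁.powersetCard a ×ˢ T₂.powersetCard (k - a)).card := by
        refine card_le_card fun p hp => ?_
        obtain ⟨X, hX, rfl⟩ := mem_image.1 hp
        obtain ⟨hXT, hcard, hJ⟩ := hE X hX
        have := card_eq_card_inter_add_card_inter hT hXT
        refine mem_biUnion.2 ⟨_, hJ, mem_product.2 ⟨mem_powersetCard.2 ⟨?_, card_evens _⟩,
          mem_powersetCard.2 ⟨?_, by rw [card_evens]; omega⟩⟩⟩
        exacts [evens_inter_subset_right _ _, evens_inter_subset_right _ _]
    _ ≤ ∑ a ∈ J, (T₁.powersetCard a ×ˢ T₂.powersetCard (k - a)).card := card_biUnion_le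
    _ = _ := by simp only [card_product, card_powersetCard]

end Gadget

theorem exists_exactCover_gadgets {T₁ T₂ : Finset ℕ} (hT : Disjoint T₁ T₂) (k : ℕ)
    (J : Finset ℕ) :
    ∃ N ≤ ∑ a ∈ J, T₁.card.choose a * T₂.card.choose (k - a),
      ExactCover (T₁ ∪ T₂) (2 * k + 1) N
        {X | X ⊆ T₁ ∪ T₂ ∧ X.card = 2 * k + 1 ∧ (X ∩ T₁).card / 2 ∈ J} := by
  set E := ((T₁ ∪ T₂).powersetCard (2 * k + 1)).filter fun X => (X ∩ T₁).card / 2 ∈ J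
  have hE : ∀ {X}, X ∈ E ↔ X ⊆ T₁ ∪ T₂ ∧ X.card = 2 * k + 1 ∧ (X ∩ T₁).card / 2 ∈ J := by
    simp only [E, mem_filter, mem_powersetCard, and_assoc, implies_true]
  set φ : Finset ℕ → Finset ℕ × Finset ℕ := fun X => (evens (X ∩ T₁), evens (X ∩ T₂))
  have hfiber : ∀ X₀ ∈ E, ∀ X, IsTransversal (gadgetParts T₁ (φ X₀).1 T₂ (φ X₀).2) X ↔
      X ∈ E ∧ φ X = φ X₀ := by
    intro X₀ hX₀ X
    obtain ⟨hX₀T, hcard₀, hJ₀⟩ := hE.1 hX₀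
    rw [isTransversal_gadgetParts_evens_iff hT hX₀T (hcard₀ ▸ odd_two_mul_add_one k), hE,
      Prod.ext_iff, hcard₀]
    refine ⟨fun ⟨hX, hcard, e₁, e₂⟩ => ⟨⟨hX, hcard, ?_⟩, e₁, e₂⟩,
      fun ⟨⟨hX, hcard, _⟩, e₁, e₂⟩ => ⟨hX, hcard, e₁, e₂⟩⟩
    rwa [← card_evens, e₁, card_evens]
  refine ⟨_, card_image_evens_le hT fun X hX => hE.1 hX, ExactCover.of_fibers φ (E.image φ)
    (fun p => Block.ofTransversal (gadgetParts T₁ p.1.1 T₂ p.1.2) ?_ ?_ ?_) (fun p => ?_)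
    fun X hX => mem_image_of_mem φ (hE.2 hX)⟩
  all_goals obtain ⟨X₀, hX₀, hp⟩ := mem_image.1 p.2
  · exact hp ▸ fun P =>
      subset_of_mem_gadgetParts (evens_inter_subset_right _ _) (evens_inter_subset_right _ _)
  · exact hp ▸
      pairwiseDisjoint_gadgetParts hT (evens_inter_subset_right _ _) (evens_inter_subset_right _ _)
  · exact hp ▸ ⟨X₀, (hfiber X₀ hX₀ X₀).2 ⟨hX₀, rfl⟩, (hE.1 hX₀).2.1⟩
  · ext X
    rw [Block.ofTransversal, Block.ofFinset_edges, Set.mem_ofPred_eq, ← hp, hfiber X₀ hX₀ X]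
    exact and_congr_left fun _ => hE

theorem f_four_mul_add_one_le (d m : ℕ) :
    f (4 * d + 1) (2 * m) ≤ 2 * ∑ i ∈ range d, m.choose i * m.choose (2 * d - i)
      + 2 * (f (2 * d) m * f (2 * d + 1) m) := by
  obtain ⟨B, hBdef⟩ : ∃ B, (range m).map (addLeftEmbedding m) = B := ⟨_, rfl⟩
  have hV : range (2 * m) = range m ∪ B := by rw [two_mul, range_add, hBdef]
  have hB : B.card = m := by rw [← hBdef, card_map, card_range]
  have hAB : Disjoint (range m) B := hBdef ▸ disjoint_range_addLeftEmbedding m _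
  have hcoverB : ∀ r, ExactCover B r (f r m) {X | X ⊆ B ∧ X.card = r} := fun r =>
    hBdef ▸ exactCover_map_range _ r m
  have hsplit : ∀ X ⊆ range m ∪ B, X.card = (X ∩ range m).card + (X ∩ B).card := fun X =>
    card_eq_card_inter_add_card_inter hAB
  obtain ⟨k₁, hk₁, G₁⟩ := exists_exactCover_gadgets hAB (2 * d) (range d)
  obtain ⟨k₂, hk₂, G₂⟩ := exists_exactCover_gadgets hAB.symm (2 * d) (range d)
  have P₁ := (exactCover_f (2 * d) m).prod_complete (hcoverB (2 * d + 1)) hAB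
  have P₂ := (exactCover_f (2 * d + 1) m).prod_complete (hcoverB (2 * d)) hAB
  rw [union_comm B] at G₂
  simp only [mem_range] at G₁ G₂
  rw [show 2 * (2 * d) + 1 = 4 * d + 1 by ring] at G₁ G₂
  rw [show 2 * d + (2 * d + 1) = 4 * d + 1 by ring] at P₁
  rw [show 2 * d + 1 + 2 * d = 4 * d + 1 by ring] at P₂
  have hall := (G₁.union_of_pred G₂ ?g₁).union_of_pred (P₁.union_of_pred P₂ ?g₂) ?g₃
  case g₁ | g₂ | g₃ =>
    intro X hX hc
    have := hsplit X hX
    omega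
  have hcover : ExactCover (range (2 * m)) (4 * d + 1) (k₁ + k₂ + (f (2 * d) m * f (2 * d + 1) m
      + f (2 * d + 1) m * f (2 * d) m)) {X | X ⊆ range (2 * m) ∧ X.card = 4 * d + 1} := by
    rw [hV]
    convert hall using 1
    ext X
    simp only [Set.mem_ofPred_eq]
    refine ⟨fun ⟨hX, hc⟩ => ⟨hX, hc, ?_⟩, fun ⟨hX, hc, _⟩ => ⟨hX, hc⟩⟩
    have := hsplit X hX
    omega
  rw [card_range, hB] at hk₁ hk₂
  have := f_le_of_exactCover hcover
  linarith

theorem f_odd_paired_recurrence_general (d : ℕ) (r : ℕ) (hr : r = 4 * d + 1)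
    (ε : ℝ) (hε : 0 < ε) :
    ∃ N : ℕ, ∀ n : ℕ, Even n → N ≤ n →
      (f r n : ℝ) ≤ 2 * (1 + ε) *
          (∑ i ∈ Finset.range d, ((n / 2).choose i : ℝ) * ((n / 2).choose ((r - 1) / 2 - i) : ℝ))
        + 2 * (f (2 * d) (n / 2) : ℝ) * (f (2 * d + 1) (n / 2) : ℝ) := by
  refine ⟨0, fun n ⟨m, hm⟩ _ => ?_⟩
  obtain rfl : n = 2 * m := by omega
  rw [hr, show 2 * m / 2 = m by omega, show (4 * d + 1 - 1) / 2 = 2 * d by omega]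
  have hbound : (f (4 * d + 1) (2 * m) : ℝ) ≤
      2 * ∑ i ∈ range d, (m.choose i : ℝ) * (m.choose (2 * d - i) : ℝ)
        + 2 * ((f (2 * d) m : ℝ) * f (2 * d + 1) m) := by
    exact_mod_cast f_four_mul_add_one_le d m
  have hε_sum : 0 ≤ ε * ∑ i ∈ range d, (m.choose i : ℝ) * (m.choose (2 * d - i) : ℝ) := by
    positivity
  linarith

theorem f_odd_paired_recurrence (d : ℕ) (hd : 1 ≤ d) (r : ℕ) (hr : r = 4 * d + 1)
    (ε : ℝ) (hε : 0 < ε) :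
    ∃ N : ℕ, ∀ n : ℕ, Even n → N ≤ n →
      (f r n : ℝ) ≤ 2 * (1 + ε) *
          (∑ i ∈ Finset.range d, ((n / 2).choose i : ℝ) * ((n / 2).choose ((r - 1) / 2 - i) : ℝ))
        + 2 * (f (2 * d) (n / 2) : ℝ) * (f (2 * d + 1) (n / 2) : ℝ) :=
  f_odd_paired_recurrence_general d r hr ε hε
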